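/- Let A ⊂ ℝⁿ be open and bounded and u ∈ H¹(A) with |u| ≤ M. Then ∫_A |∇H̃(u/√ε)| dx = (2/c₀) ∫_A 2√(W(u/√ε)) |∇u| ε^{-1/2} dx ≤ (2/c₀) ∫_A (|∇u|² + (1/ε)W(u/√ε)) dx; in particular H̃(u/√ε) ∈ BV(A) with total variation bounded by (2/c₀) E_ε(u, A), and ‖H̃(u/√ε)‖_∞ ≤ 1. -/

import Mathlib

open MeasureTheory Metric Filter Topology Bornology

/-- The truncated double-well potential. -/
noncomputable def W (t : ℝ) : ℝ := if |t| ≤ 1 then (1 - t ^ 2) ^ 2 else 0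

/-- `H(t) = ∫₀ᵗ 2√(W(s)) ds`. -/
noncomputable def Hfun (t : ℝ) : ℝ := ∫ s in (0:ℝ)..t, 2 * Real.sqrt (W s)

/-- The constant `c₀ = 2 H(1)`. -/
noncomputable def c₀ : ℝ := 2 * Hfun 1

/-- The renormalised primitive `H̃ = (2/c₀) H`. -/
noncomputable def Htilde (t : ℝ) : ℝ := (2 / c₀) * Hfun t

/-- Euclidean space `ℝⁿ`. -/
abbrev En (n : ℕ) := EuclideanSpace ℝ (Fin n)

/-- Divergence of a vector field. -/
noncomputable def diverg {n : ℕ} (ξ : En n → En n) (x : En n) : ℝ :=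
  (LinearMap.trace ℝ (En n)) (fderiv ℝ ξ x).toLinearMap

/-- The set of admissible flux values in the variational definition of the relative perimeter. -/
def divFlux {n : ℕ} (Ω A : Set (En n)) : Set ℝ :=
  { r | ∃ ξ : En n → En n, ContDiff ℝ 1 ξ ∧ HasCompactSupport ξ ∧ tsupport ξ ⊆ A ∧
      (∀ x, ‖ξ x‖ ≤ 1) ∧ r = ∫ x in Ω, diverg ξ x }

/-- Relative perimeter of `Ω` in `A`:
`Per(Ω,A) = sup { ∫_Ω div ξ : ξ ∈ C¹_c(A;ℝⁿ), ‖ξ‖_∞ ≤ 1 }`. -/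
noncomputable def Per {n : ℕ} (Ω A : Set (En n)) : ℝ := sSup (divFlux Ω A)

/-- `Ω` has finite (relative) perimeter in `A`. -/
def HasFinitePerimeter {n : ℕ} (Ω A : Set (En n)) : Prop := BddAbove (divFlux Ω A)

/-- Membership in `H¹(A)`: the function and its gradient are square integrable on `A`. -/
def MemH1 {n : ℕ} (A : Set (En n)) (u : En n → ℝ) : Prop :=
  MemLp u 2 (volume.restrict A) ∧
    MemLp (fun x => fderiv ℝ u x) 2 (volume.restrict A)

/-- The singularly perturbed energy `E_ε(u,A)`. -/
noncomputable def Eeps {n : ℕ} (ε : ℝ) (u : En n → ℝ) (A : Set (En n)) : ℝ :=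
  ∫ x in A, (‖fderiv ℝ u x‖ ^ 2 + (1 / ε) * W (u x / Real.sqrt ε))


lemma W_eq (t : ℝ) : W t = (max (1 - t ^ 2) 0) ^ 2 := by
  unfold W
  rcases le_or_gt |t| 1 with h | h
  · rw [if_pos h, max_eq_left (by nlinarith [sq_abs t, abs_nonneg t] : (0:ℝ) ≤ 1 - t ^ 2)]
  · rw [if_neg (not_le.mpr h),
      max_eq_right (by nlinarith [sq_abs t, abs_nonneg t] : 1 - t ^ 2 ≤ (0:ℝ))]
    norm_num

lemma W_nonneg (t : ℝ) : 0 ≤ W t := by rw [W_eq]; positivity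

lemma W_le_one (t : ℝ) : W t ≤ 1 := by
  rw [W_eq]
  have h1 : max (1 - t ^ 2) 0 ≤ 1 := max_le (by nlinarith [sq_nonneg t]) one_pos.le
  have h0 : 0 ≤ max (1 - t ^ 2) 0 := le_max_right _ _
  nlinarith

lemma sqrt_W (t : ℝ) : Real.sqrt (W t) = max (1 - t ^ 2) 0 := by
  rw [W_eq, Real.sqrt_sq (le_max_right _ _)]

lemma psi_cont : Continuous (fun s : ℝ => 2 * Real.sqrt (W s)) := by
  have : (fun s : ℝ => 2 * Real.sqrt (W s)) = fun s : ℝ => 2 * max (1 - s ^ 2) 0 := by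
    funext s; rw [sqrt_W]
  rw [this]
  exact continuous_const.mul ((continuous_const.sub (continuous_pow 2)).max continuous_const)

lemma psi_intInt (a b : ℝ) : IntervalIntegrable (fun s : ℝ => 2 * Real.sqrt (W s)) volume a b :=
  psi_cont.intervalIntegrable a b

lemma Hfun_hasStrictDerivAt (t : ℝ) : HasStrictDerivAt Hfun (2 * Real.sqrt (W t)) t :=
  intervalIntegral.integral_hasStrictDerivAt_right (psi_intInt 0 t)
    (psi_cont.stronglyMeasurableAtFilter volume (𝓝 t)) psi_cont.continuousAt

lemma Hfun_sub (a b : ℝ) : Hfun b - Hfun a = ∫ s in a..b, 2 * Real.sqrt (W s) :=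
  intervalIntegral.integral_interval_sub_left (psi_intInt 0 b) (psi_intInt 0 a)

lemma Hfun_mono : Monotone Hfun := by
  intro a b hab
  have h := Hfun_sub a b
  have h2 : 0 ≤ ∫ s in a..b, 2 * Real.sqrt (W s) :=
    intervalIntegral.integral_nonneg hab (fun s _ => by positivity)
  linarith

lemma Hfun_one : Hfun 1 = 4 / 3 := by
  have h : Hfun 1 = ∫ s in (0:ℝ)..1, (2 - 2 * s ^ 2) := by
    refine intervalIntegral.integral_congr fun s hs => ?_
    rw [Set.uIcc_of_le (by norm_num : (0:ℝ) ≤ 1)] at hs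
    rw [sqrt_W, max_eq_left (by nlinarith [hs.1, hs.2] : (0:ℝ) ≤ 1 - s ^ 2)]
    ring
  rw [h, intervalIntegral.integral_sub (g := fun s : ℝ => 2 * s ^ 2) intervalIntegrable_const
    (((continuous_const.mul (continuous_pow 2) : Continuous (fun s : ℝ => 2 * s ^ 2)).intervalIntegrable _ _)),
    intervalIntegral.integral_const, intervalIntegral.integral_const_mul,
    integral_pow]
  norm_num

lemma Hfun_neg_one : Hfun (-1) = -(4 / 3) := by
  have h : Hfun (-1) = ∫ s in (0:ℝ)..(-1), (2 - 2 * s ^ 2) := by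
    refine intervalIntegral.integral_congr fun s hs => ?_
    rw [Set.uIcc_of_ge (by norm_num : (-1:ℝ) ≤ 0)] at hs
    rw [sqrt_W, max_eq_left (by nlinarith [hs.1, hs.2] : (0:ℝ) ≤ 1 - s ^ 2)]
    ring
  rw [h, intervalIntegral.integral_sub (g := fun s : ℝ => 2 * s ^ 2) intervalIntegrable_const
    (((continuous_const.mul (continuous_pow 2) : Continuous (fun s : ℝ => 2 * s ^ 2)).intervalIntegrable _ _)),
    intervalIntegral.integral_const, intervalIntegral.integral_const_mul,
    integral_pow]
  norm_num

lemma c₀_eq : c₀ = 8 / 3 := by rw [c₀, Hfun_one]; norm_num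

lemma Hfun_of_one_le {t : ℝ} (ht : 1 ≤ t) : Hfun t = 4 / 3 := by
  have h := Hfun_sub 1 t
  have h0 : (∫ s in (1:ℝ)..t, 2 * Real.sqrt (W s)) = 0 := by
    have : ∀ s ∈ Set.uIcc (1:ℝ) t, 2 * Real.sqrt (W s) = (fun _ : ℝ => (0:ℝ)) s := by
      intro s hs
      rw [Set.uIcc_of_le ht] at hs
      rw [sqrt_W, max_eq_right (by nlinarith [hs.1] : 1 - s ^ 2 ≤ (0:ℝ))]
      simp
    rw [intervalIntegral.integral_congr this, intervalIntegral.integral_zero]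
  rw [Hfun_one] at h; linarith

lemma Hfun_of_le_neg_one {t : ℝ} (ht : t ≤ -1) : Hfun t = -(4 / 3) := by
  have h := Hfun_sub t (-1)
  have h0 : (∫ s in t..(-1:ℝ), 2 * Real.sqrt (W s)) = 0 := by
    have : ∀ s ∈ Set.uIcc t (-1:ℝ), 2 * Real.sqrt (W s) = (fun _ : ℝ => (0:ℝ)) s := by
      intro s hs
      rw [Set.uIcc_of_le ht] at hs
      have hs2 : s ≤ -1 := hs.2
      rw [sqrt_W, max_eq_right (by nlinarith : 1 - s ^ 2 ≤ (0:ℝ))]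
      simp
    rw [intervalIntegral.integral_congr this, intervalIntegral.integral_zero]
  rw [Hfun_neg_one] at h; linarith

lemma Hfun_le (t : ℝ) : Hfun t ≤ 4 / 3 := by
  rcases le_or_gt t 1 with h | h
  · calc Hfun t ≤ Hfun 1 := Hfun_mono h
      _ = 4 / 3 := Hfun_one
  · rw [Hfun_of_one_le h.le]

lemma Hfun_ge (t : ℝ) : -(4 / 3) ≤ Hfun t := by
  rcases le_or_gt (-1) t with h | h
  · calc -(4/3 : ℝ) = Hfun (-1) := Hfun_neg_one.symm
      _ ≤ Hfun t := Hfun_mono h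
  · rw [Hfun_of_le_neg_one h.le]

lemma Htilde_eq (t : ℝ) : Htilde t = (3 / 4) * Hfun t := by
  rw [Htilde, c₀_eq]; norm_num

lemma Htilde_abs_le (t : ℝ) : |Htilde t| ≤ 1 := by
  rw [Htilde_eq, abs_le]
  constructor <;> nlinarith [Hfun_le t, Hfun_ge t]

lemma Htilde_mono : Monotone Htilde := by
  intro a b hab
  rw [Htilde_eq, Htilde_eq]
  nlinarith [Hfun_mono hab]

lemma Htilde_le_of_one_le {s : ℝ} (hs : 1 ≤ s) (t : ℝ) : Htilde t ≤ Htilde s := by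
  rw [Htilde_eq, Htilde_eq, Hfun_of_one_le hs]
  nlinarith [Hfun_le t]

lemma Htilde_ge_of_le_neg_one {s : ℝ} (hs : s ≤ -1) (t : ℝ) : Htilde s ≤ Htilde t := by
  rw [Htilde_eq, Htilde_eq, Hfun_of_le_neg_one hs]
  nlinarith [Hfun_ge t]

lemma Htilde_hasStrictDerivAt (t : ℝ) :
    HasStrictDerivAt Htilde ((2 / c₀) * (2 * Real.sqrt (W t))) t := by
  unfold Htilde
  exact (Hfun_hasStrictDerivAt t).const_mul (2 / c₀)

lemma Htilde_strictMonoOn : StrictMonoOn Htilde (Set.Icc (-1:ℝ) 1) := by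
  apply strictMonoOn_of_deriv_pos (convex_Icc _ _)
  · exact fun t _ => ((Htilde_hasStrictDerivAt t).hasDerivAt.differentiableAt).continuousAt.continuousWithinAt
  · intro t ht
    rw [interior_Icc] at ht
    rw [(Htilde_hasStrictDerivAt t).hasDerivAt.deriv, c₀_eq, sqrt_W,
      max_eq_left (by nlinarith [ht.1, ht.2] : (0:ℝ) ≤ 1 - t ^ 2)]
    nlinarith [ht.1, ht.2]


lemma key_pointwise {n : ℕ} {ε : ℝ} (hε : 0 < ε) (u : En n → ℝ) (x : En n) :
    ‖fderiv ℝ (fun y => Htilde (u y / Real.sqrt ε)) x‖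
      = (2 / c₀) * (2 * Real.sqrt (W (u x / Real.sqrt ε)) * ‖fderiv ℝ u x‖ * (Real.sqrt ε)⁻¹) := by
  have hsε : (0:ℝ) < Real.sqrt ε := Real.sqrt_pos.mpr hε
  have h2c : (0:ℝ) ≤ 2 / c₀ := by rw [c₀_eq]; norm_num
  by_cases hdu : DifferentiableAt ℝ u x
  · -- chain rule case
    have hgd : HasFDerivAt (fun y => u y / Real.sqrt ε)
        ((Real.sqrt ε)⁻¹ • fderiv ℝ u x) x := by
      simpa [div_eq_mul_inv] using hdu.hasFDerivAt.mul_const (Real.sqrt ε)⁻¹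
    have hcomp : HasFDerivAt (fun y => Htilde (u y / Real.sqrt ε))
        (((2 / c₀) * (2 * Real.sqrt (W (u x / Real.sqrt ε)))) •
          ((Real.sqrt ε)⁻¹ • fderiv ℝ u x)) x :=
      (Htilde_hasStrictDerivAt (u x / Real.sqrt ε)).hasDerivAt.comp_hasFDerivAt (h₂ := Htilde) x hgd
    rw [hcomp.fderiv, norm_smul, norm_smul, Real.norm_eq_abs, Real.norm_eq_abs,
      abs_of_nonneg (by positivity : (0:ℝ) ≤ (2 / c₀) * (2 * Real.sqrt (W (u x / Real.sqrt ε)))),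
      abs_of_nonneg (by positivity : (0:ℝ) ≤ (Real.sqrt ε)⁻¹)]
    ring
  · have hU : fderiv ℝ u x = 0 := fderiv_zero_of_not_differentiableAt hdu
    by_cases hdh : DifferentiableAt ℝ (fun y => Htilde (u y / Real.sqrt ε)) x
    · suffices hz : fderiv ℝ (fun y => Htilde (u y / Real.sqrt ε)) x = 0 by
        rw [hz, hU]; simp
      rcases le_or_gt 1 (u x / Real.sqrt ε) with hge | hlt1
      · exact IsLocalMax.fderiv_eq_zero
          (Filter.Eventually.of_forall fun y => Htilde_le_of_one_le hge _)
      rcases le_or_gt (u x / Real.sqrt ε) (-1) with hle | hlt2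
      · exact IsLocalMin.fderiv_eq_zero
          (Filter.Eventually.of_forall fun y => Htilde_ge_of_le_neg_one hle _)
      · -- impossible: u would be differentiable at x
        exfalso
        set a : ℝ := u x / Real.sqrt ε with ha
        -- continuity of g := u / √ε at x
        have hch : ContinuousAt (fun y => Htilde (u y / Real.sqrt ε)) x := hdh.continuousAt
        have hgc : ContinuousAt (fun y => u y / Real.sqrt ε) x := by
          rw [Metric.continuousAt_iff]
          intro δ hδ
          obtain ⟨δ', hδ'0, hδ'δ, hb1, hb2⟩ :
              ∃ δ' : ℝ, 0 < δ' ∧ δ' ≤ δ ∧ -1 < a - δ' ∧ a + δ' < 1 := by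
            refine ⟨min δ (min ((a + 1) / 2) ((1 - a) / 2)), ?_, min_le_left _ _, ?_, ?_⟩
            · apply lt_min hδ (lt_min (by linarith) (by linarith))
            · have h2 := min_le_right δ (min ((a + 1) / 2) ((1 - a) / 2))
              have h3 : min ((a + 1) / 2) ((1 - a) / 2) ≤ (a + 1) / 2 := min_le_left _ _
              linarith [le_trans h2 h3]
            · have h2 := min_le_right δ (min ((a + 1) / 2) ((1 - a) / 2))
              have h3 : min ((a + 1) / 2) ((1 - a) / 2) ≤ (1 - a) / 2 := min_le_right _ _
              linarith [le_trans h2 h3]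
          have hmem1 : a ∈ Set.Icc (-1:ℝ) 1 := ⟨by linarith, by linarith⟩
          have hmem2 : a + δ' ∈ Set.Icc (-1:ℝ) 1 := ⟨by linarith, by linarith⟩
          have hmem3 : a - δ' ∈ Set.Icc (-1:ℝ) 1 := ⟨by linarith, by linarith⟩
          set η : ℝ := min (Htilde (a + δ') - Htilde a) (Htilde a - Htilde (a - δ')) with hη
          have hη0 : 0 < η := by
            apply lt_min
            · have := Htilde_strictMonoOn hmem1 hmem2 (by linarith)
              linarith
            · have := Htilde_strictMonoOn hmem3 hmem1 (by linarith)
              linarith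
          rw [Metric.continuousAt_iff] at hch
          obtain ⟨r, hr0, hr⟩ := hch η hη0
          refine ⟨r, hr0, fun {y} hy => ?_⟩
          have hy' := hr hy
          rw [Real.dist_eq] at hy' ⊢
          rw [abs_lt] at hy'
          have hub : u y / Real.sqrt ε < a + δ' := by
            by_contra hcon
            push_neg at hcon
            have := Htilde_mono hcon
            have h5 : η ≤ Htilde (a + δ') - Htilde a := min_le_left _ _
            linarith [hy'.2]
          have hlb : a - δ' < u y / Real.sqrt ε := by
            by_contra hcon
            push_neg at hcon
            have := Htilde_mono hcon
            have h5 : η ≤ Htilde a - Htilde (a - δ') := min_le_right _ _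
            linarith [hy'.1]
          rw [abs_lt]
          constructor <;> linarith
        -- local inverse
        have hf := Htilde_hasStrictDerivAt a
        have hd0 : (2 / c₀) * (2 * Real.sqrt (W a)) ≠ 0 := by
          have h1 : Real.sqrt (W a) = 1 - a ^ 2 := by
            rw [sqrt_W, max_eq_left (by nlinarith : (0:ℝ) ≤ 1 - a ^ 2)]
          rw [h1, c₀_eq]
          have : (0:ℝ) < 1 - a ^ 2 := by nlinarith
          positivity
        have hφd := hf.to_localInverse hd0
        have hev : ∀ᶠ t in 𝓝 a,
            (hf.localInverse Htilde _ a hd0) (Htilde t) = t :=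
          (hf.hasStrictFDerivAt_equiv hd0).eventually_left_inverse
        have hev2 : (fun y => (hf.localInverse Htilde _ a hd0) (Htilde (u y / Real.sqrt ε)))
            =ᶠ[𝓝 x] (fun y => u y / Real.sqrt ε) := hgc.eventually hev
        have hφ : DifferentiableAt ℝ
            (fun y => (hf.localInverse Htilde _ a hd0) (Htilde (u y / Real.sqrt ε))) x :=
          (hφd.hasDerivAt.differentiableAt).comp x hdh
        have hgdiff : DifferentiableAt ℝ (fun y => u y / Real.sqrt ε) x :=
          hφ.congr_of_eventuallyEq hev2.symm
        have : DifferentiableAt ℝ u x := by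
          have h := hgdiff.mul_const (Real.sqrt ε)
          have heq : (fun y => u y / Real.sqrt ε * Real.sqrt ε) = u := by
            funext y; field_simp
          rwa [heq] at h
        exact hdu this
    · rw [fderiv_zero_of_not_differentiableAt hdh, hU]
      simp

/-- the uniform BV bound on the phase indicator:
`∫_A |∇H̃(u/√ε)| = (2/c₀)∫_A 2√(W(u/√ε))|∇u|ε^{-1/2} ≤ (2/c₀) E_ε(u,A)`, and `|H̃(u/√ε)| ≤ 1`. -/
theorem stmt_13 {n : ℕ} (A : Set (En n)) (hA : IsOpen A) (hAb : IsBounded A)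
    (M ε : ℝ) (hε : 0 < ε) (u : En n → ℝ) (hu : MemH1 A u) (hM : ∀ x, |u x| ≤ M) :
    ((∫ x in A, ‖fderiv ℝ (fun y => Htilde (u y / Real.sqrt ε)) x‖)
      = (2 / c₀) * ∫ x in A,
          2 * Real.sqrt (W (u x / Real.sqrt ε)) * ‖fderiv ℝ u x‖ * (Real.sqrt ε)⁻¹) ∧
    ((2 / c₀) * (∫ x in A,
        2 * Real.sqrt (W (u x / Real.sqrt ε)) * ‖fderiv ℝ u x‖ * (Real.sqrt ε)⁻¹)
      ≤ (2 / c₀) * Eeps ε u A) ∧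
    (∀ x : En n, |Htilde (u x / Real.sqrt ε)| ≤ 1) := by
  have hsε : (0:ℝ) < Real.sqrt ε := Real.sqrt_pos.mpr hε
  have h2c : (0:ℝ) ≤ 2 / c₀ := by rw [c₀_eq]; norm_num
  refine ⟨?_, ?_, fun x => Htilde_abs_le _⟩
  · rw [← MeasureTheory.integral_const_mul]
    refine MeasureTheory.integral_congr_ae (Filter.Eventually.of_forall fun x => ?_)
    show ‖fderiv ℝ (fun y => Htilde (u y / Real.sqrt ε)) x‖
      = 2 / c₀ * (2 * Real.sqrt (W (u x / Real.sqrt ε)) * ‖fderiv ℝ u x‖ * (Real.sqrt ε)⁻¹)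
    exact key_pointwise hε u x
  · apply mul_le_mul_of_nonneg_left ?_ h2c
    unfold Eeps
    apply MeasureTheory.integral_mono_of_nonneg
    · refine Filter.Eventually.of_forall fun x => ?_
      show (0:ℝ) ≤ 2 * Real.sqrt (W (u x / Real.sqrt ε)) * ‖fderiv ℝ u x‖ * (Real.sqrt ε)⁻¹
      positivity
    · -- integrability of the energy density
      have hμA : volume A < ⊤ := hAb.measure_lt_top
      have int1 : Integrable (fun x => ‖fderiv ℝ u x‖ ^ 2) (volume.restrict A) := by
        have h := hu.2.integrable_norm_rpow (by norm_num) (by norm_num)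
        have h2 : ((2:ENNReal)).toReal = (2:ℝ) := by norm_num
        rw [h2] at h
        refine h.congr (Filter.Eventually.of_forall fun x => ?_)
        show ‖fderiv ℝ u x‖ ^ (2:ℝ) = ‖fderiv ℝ u x‖ ^ (2:ℕ)
        rw [Real.rpow_two]
      have int2 : Integrable (fun x => (1 / ε) * W (u x / Real.sqrt ε))
          (volume.restrict A) := by
        have hWc : Continuous W := by
          have : W = fun t : ℝ => (max (1 - t ^ 2) 0) ^ 2 := funext W_eq
          rw [this]
          exact ((continuous_const.sub (continuous_pow 2)).max continuous_const).pow 2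
        have hcont : Continuous (fun t : ℝ => (1 / ε) * W (t / Real.sqrt ε)) :=
          continuous_const.mul (hWc.comp (continuous_id.div_const _))
        have hm : AEStronglyMeasurable (fun x => (1 / ε) * W (u x / Real.sqrt ε))
            (volume.restrict A) :=
          hcont.comp_aestronglyMeasurable hu.1.aestronglyMeasurable
        refine Integrable.mono' (g := fun _ : En n => (1 / ε)) ?_ hm
          (Filter.Eventually.of_forall fun x => ?_)
        · exact (MeasureTheory.integrableOn_const_iff).2 (Or.inr hμA)
        · rw [Real.norm_eq_abs,
            abs_of_nonneg (mul_nonneg (by positivity) (W_nonneg _))]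
          have := W_le_one (u x / Real.sqrt ε)
          have h0 : (0:ℝ) < 1 / ε := by positivity
          nlinarith
      exact int1.add int2
    · refine Filter.Eventually.of_forall fun x => ?_
      show 2 * Real.sqrt (W (u x / Real.sqrt ε)) * ‖fderiv ℝ u x‖ * (Real.sqrt ε)⁻¹
          ≤ ‖fderiv ℝ u x‖ ^ 2 + 1 / ε * W (u x / Real.sqrt ε)
      have hw2 : Real.sqrt (W (u x / Real.sqrt ε)) ^ 2 = W (u x / Real.sqrt ε) :=
        Real.sq_sqrt (W_nonneg _)
      have hs2 : ((Real.sqrt ε)⁻¹) ^ 2 = 1 / ε := by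
        rw [← Real.sqrt_inv, Real.sq_sqrt (by positivity), one_div]
      have hws : (Real.sqrt (W (u x / Real.sqrt ε)) * (Real.sqrt ε)⁻¹) ^ 2
          = 1 / ε * W (u x / Real.sqrt ε) := by
        rw [mul_pow, hw2, hs2]; ring
      nlinarith [sq_nonneg (‖fderiv ℝ u x‖
        - Real.sqrt (W (u x / Real.sqrt ε)) * (Real.sqrt ε)⁻¹), hws]
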